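/- Let m, p, q, r be natural numbers and let A ∈ ℝ^{m×p}, B ∈ ℝ^{m×q}, C ∈ ℝ^{m×r} be real matrices with the same number m of rows. Then the horizontally concatenated matrix [A, B, C] ∈ ℝ^{m×(p+q+r)} satisfies ‖[A, B, C]‖_* ≤ ‖[A, C]‖_* + ‖[B, C]‖_*, where [A, C] ∈ ℝ^{m×(p+r)} and [B, C] ∈ ℝ^{m×(q+r)} are the corresponding horizontal concatenations. -/

import Mathlib

/-- The nuclear norm of a real matrix `M`: the trace of the positive
semidefinite square root of `Mᵀ * M`. -/
noncomputable def nuclearNorm {m n : Type*} [Fintype m] [Fintype n] [DecidableEq n]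
    (M : Matrix m n ℝ) : ℝ :=
  Matrix.trace (let hA := Matrix.posSemidef_conjTranspose_mul_self M;
    hA.1.eigenvectorUnitary.1 * Matrix.diagonal ((↑) ∘ (√·) ∘ hA.1.eigenvalues) *
      (star hA.1.eigenvectorUnitary : Matrix n n ℝ))

/-!
The nuclear norm is the dual of the operator norm: `‖M‖_* = max {tr (Vᴴ M) : Vᴴ V ≤ 1}`.
The maximum is attained at the partial isometry `V` of the polar decomposition `M = V |M|`.
If `V = [V₁, V₂, V₃]` is this maximiser for `M = [A, B, C]`, then
`‖M‖_* = tr (V₁ᴴ A) + tr (V₂ᴴ B) + tr (V₃ᴴ C) = tr ([V₁, V₃]ᴴ [A, C]) + tr ([V₂, 0]ᴴ [B, C])`,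
and `[V₁, V₃]`, `[V₂, 0]` are again contractions, so the two terms are bounded by
`‖[A, C]‖_*` and `‖[B, C]‖_*`.
-/

open scoped MatrixOrder

namespace Matrix

variable {m n : Type*} [Fintype m]

theorem conjTranspose_mul_self_submatrix_le_one {l : Type*} [DecidableEq l] [DecidableEq n]
    {V : Matrix m n ℝ} (hV : Vᴴ * V ≤ 1) {e : l → n} (he : Function.Injective e) :
    (V.submatrix id e)ᴴ * V.submatrix id e ≤ 1 := by
  rw [le_iff, conjTranspose_submatrix, ← submatrix_mul _ _ _ _ _ Function.bijective_id,
    ← submatrix_one e he]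
  exact (le_iff.mp hV).submatrix e

variable [Fintype n]

theorem two_mul_trace_conjTranspose_mul_le (X Y : Matrix m n ℝ) :
    2 * (Xᴴ * Y).trace ≤ (Xᴴ * X).trace + (Yᴴ * Y).trace := by
  have hsq := (posSemidef_conjTranspose_mul_self (X - Y)).trace_nonneg
  have hYX : (Yᴴ * X).trace = (Xᴴ * Y).trace := by
    rw [← star_trivial (Xᴴ * Y).trace, ← trace_conjTranspose, conjTranspose_mul,
      conjTranspose_conjTranspose]
  rw [conjTranspose_sub, Matrix.sub_mul, Matrix.mul_sub, Matrix.mul_sub, trace_sub, trace_sub,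
    trace_sub, hYX] at hsq
  linarith

theorem trace_conjTranspose_fromCols_mul_fromCols {l : Type*} [Fintype l]
    (X P : Matrix m n ℝ) (Y Q : Matrix m l ℝ) :
    ((fromCols X Y)ᴴ * fromCols P Q).trace = (Xᴴ * P).trace + (Yᴴ * Q).trace := by
  rw [conjTranspose_fromCols_eq_fromRows_conjTranspose, fromRows_mul_fromCols]
  simp [trace, Fintype.sum_sum_type]

variable [DecidableEq n]

theorem conjTranspose_mul_self_fromCols_zero_le_one {l : Type*} [Fintype l] [DecidableEq l]
    {V : Matrix m n ℝ} (hV : Vᴴ * V ≤ 1) :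
    (fromCols V (0 : Matrix m l ℝ))ᴴ * fromCols V (0 : Matrix m l ℝ) ≤ 1 := by
  rw [le_iff, conjTranspose_fromCols_eq_fromRows_conjTranspose, fromRows_mul_fromCols,
    ← (fromBlocks_one : fromBlocks (1 : Matrix n n ℝ) 0 0 (1 : Matrix l l ℝ) = 1),
    sub_eq_add_neg, fromBlocks_neg, fromBlocks_add]
  have : Invertible (1 : Matrix l l ℝ) := invertibleOne
  simpa [← sub_eq_add_neg] using (PosDef.fromBlocks₂₂ (1 - Vᴴ * V) 0
    (PosDef.one : (1 : Matrix l l ℝ).PosDef)).mpr (by simpa using le_iff.mp hV)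

theorem trace_conjTranspose_mul_self_mul_le {Z : Matrix m n ℝ} (hZ : Zᴴ * Z ≤ 1)
    {R : Matrix n n ℝ} (hR : R.IsHermitian) : ((Z * R)ᴴ * (Z * R)).trace ≤ (R * R).trace := by
  have h := ((le_iff.mp hZ).conjTranspose_mul_mul_same R).trace_nonneg
  rw [Matrix.mul_sub, Matrix.sub_mul, trace_sub, Matrix.mul_one, hR.eq] at h
  rw [conjTranspose_mul, hR.eq]
  simpa only [Matrix.mul_assoc, sub_nonneg] using h

theorem continuousOn_spectrum (f : ℝ → ℝ) (A : Matrix n n ℝ) : ContinuousOn f (spectrum ℝ A) :=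
  A.finite_spectrum.continuousOn f

theorem conjTranspose_cfc (f : ℝ → ℝ) (A : Matrix n n ℝ) : (cfc f A)ᴴ = cfc f A :=
  (cfc_predicate f A).star_eq

theorem nuclearNorm_eq_trace_cfc_sqrt (M : Matrix m n ℝ) :
    nuclearNorm M = (cfc Real.sqrt (Mᴴ * M)).trace := by
  rw [(isHermitian_conjTranspose_mul_self M).cfc_eq, IsHermitian.cfc,
    Unitary.conjStarAlgAut_apply]
  rfl

theorem conjTranspose_mul_cfc_mul_mul_cfc (M : Matrix m n ℝ) (f g : ℝ → ℝ) :
    (M * cfc f (Mᴴ * M))ᴴ * (M * cfc g (Mᴴ * M)) = cfc (fun x ↦ f x * x * g x) (Mᴴ * M) := by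
  have hc := continuousOn_spectrum (A := Mᴴ * M)
  rw [cfc_mul _ _ _ (hc _) (hc _), cfc_mul _ _ _ (hc _) (hc _),
    cfc_id' ℝ (Mᴴ * M) (isHermitian_conjTranspose_mul_self M).isSelfAdjoint,
    conjTranspose_mul, conjTranspose_cfc]
  simp only [Matrix.mul_assoc]

theorem mul_cfc_conjTranspose_mul_self_eq_zero (M : Matrix m n ℝ) {h : ℝ → ℝ}
    (hh : ∀ x, 0 < x → h x = 0) : M * cfc h (Mᴴ * M) = 0 := by
  rw [← conjTranspose_mul_self_eq_zero, conjTranspose_mul_cfc_mul_mul_cfc,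
    ← cfc_zero ℝ (Mᴴ * M)]
  refine cfc_congr fun x hx ↦ ?_
  rcases (spectrum_nonneg_of_nonneg (posSemidef_conjTranspose_mul_self M).nonneg hx).eq_or_lt
    with rfl | hx
  · simp
  · simp [hh x hx]

/-- Since `(√0)⁻¹ = 0`, this is `M` times the pseudo-inverse of `|M| = √(Mᴴ M)`. -/
noncomputable def polarFactor (M : Matrix m n ℝ) : Matrix m n ℝ :=
  M * cfc (fun x ↦ (√x)⁻¹) (Mᴴ * M)

theorem polarFactor_conjTranspose_mul_self_le_one (M : Matrix m n ℝ) :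
    (polarFactor M)ᴴ * polarFactor M ≤ 1 := by
  rw [polarFactor, conjTranspose_mul_cfc_mul_mul_cfc]
  refine cfc_le_one _ _ fun x _ ↦ ?_
  rcases le_or_gt x 0 with hx | hx
  · simp [Real.sqrt_eq_zero'.mpr hx]
  · rw [mul_comm, ← mul_assoc, ← mul_inv, Real.mul_self_sqrt hx.le, inv_mul_cancel₀ hx.ne']

theorem polarFactor_conjTranspose_mul (M : Matrix m n ℝ) :
    (polarFactor M)ᴴ * M = cfc Real.sqrt (Mᴴ * M) := by
  have h := conjTranspose_mul_cfc_mul_mul_cfc M (fun x ↦ (√x)⁻¹) 1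
  rw [cfc_one ℝ (Mᴴ * M) (isHermitian_conjTranspose_mul_self M).isSelfAdjoint,
    Matrix.mul_one] at h
  rw [polarFactor, h]
  refine cfc_congr fun x _ ↦ ?_
  rcases le_or_gt x 0 with hx | hx
  · simp [Real.sqrt_eq_zero'.mpr hx]
  · simp only [Pi.one_apply, mul_one]
    rw [inv_mul_eq_div, div_eq_iff (Real.sqrt_pos.mpr hx).ne', Real.mul_self_sqrt hx.le]

theorem polarFactor_mul_cfc_sqrt (M : Matrix m n ℝ) :
    polarFactor M * cfc Real.sqrt (Mᴴ * M) = M := by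
  have hc := continuousOn_spectrum (A := Mᴴ * M)
  have hker := mul_cfc_conjTranspose_mul_self_eq_zero M (h := fun x ↦ 1 - (√x)⁻¹ * √x)
    fun x hx ↦ by rw [inv_mul_cancel₀ (Real.sqrt_pos.mpr hx).ne', sub_self]
  rw [cfc_sub _ _ _ (hc _) (hc _),
    cfc_const_one ℝ (Mᴴ * M) (isHermitian_conjTranspose_mul_self M).isSelfAdjoint,
    cfc_mul _ _ _ (hc _) (hc _), Matrix.mul_sub, Matrix.mul_one, sub_eq_zero] at hker
  rw [polarFactor, Matrix.mul_assoc, ← hker]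

theorem trace_polarFactor_conjTranspose_mul (M : Matrix m n ℝ) :
    ((polarFactor M)ᴴ * M).trace = nuclearNorm M := by
  rw [polarFactor_conjTranspose_mul, nuclearNorm_eq_trace_cfc_sqrt]

theorem trace_conjTranspose_mul_le_nuclearNorm {U : Matrix m n ℝ} (hU : Uᴴ * U ≤ 1)
    (N : Matrix m n ℝ) : (Uᴴ * N).trace ≤ nuclearNorm N := by
  set R := cfc (fun x ↦ √√x) (Nᴴ * N)
  have hR : R.IsHermitian := conjTranspose_cfc _ _
  have hRR : R * R = cfc Real.sqrt (Nᴴ * N) := by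
    rw [← cfc_mul _ _ _ (continuousOn_spectrum _ _) (continuousOn_spectrum _ _)]
    simp only [Real.mul_self_sqrt (Real.sqrt_nonneg _)]
  -- `N = W R²` with `W` the polar factor and `R = |N|^{1/2}`; conclude by AM-GM.
  have hsplit : (Uᴴ * N).trace = ((U * R)ᴴ * (polarFactor N * R)).trace := by
    conv_lhs => rw [← polarFactor_mul_cfc_sqrt N, ← hRR]
    rw [← Matrix.mul_assoc, ← Matrix.mul_assoc, trace_mul_comm, conjTranspose_mul, hR.eq]
    simp only [Matrix.mul_assoc]
  have hUR := trace_conjTranspose_mul_self_mul_le hU hR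
  have hWR := trace_conjTranspose_mul_self_mul_le (polarFactor_conjTranspose_mul_self_le_one N) hR
  have hamgm := two_mul_trace_conjTranspose_mul_le (U * R) (polarFactor N * R)
  rw [nuclearNorm_eq_trace_cfc_sqrt, ← hRR]
  linarith

end Matrix

open Matrix in
theorem nuclearNorm_fromColumns_triple_le (m p q r : ℕ)
    (A : Matrix (Fin m) (Fin p) ℝ) (B : Matrix (Fin m) (Fin q) ℝ)
    (C : Matrix (Fin m) (Fin r) ℝ) :
    nuclearNorm (Matrix.fromCols A (Matrix.fromCols B C)) ≤
      nuclearNorm (Matrix.fromCols A C) + nuclearNorm (Matrix.fromCols B C) := by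
  obtain ⟨V₁, V₂, V₃, hV⟩ : ∃ V₁ V₂ V₃,
      polarFactor (fromCols A (fromCols B C)) = fromCols V₁ (fromCols V₂ V₃) :=
    ⟨_, _, _, by rw [fromCols_toCols, fromCols_toCols]⟩
  have hV₁₂₃ := polarFactor_conjTranspose_mul_self_le_one (fromCols A (fromCols B C))
  rw [hV] at hV₁₂₃
  have hV₁₃ : (fromCols V₁ V₃)ᴴ * fromCols V₁ V₃ ≤ 1 := by
    have h : (fromCols V₁ (fromCols V₂ V₃)).submatrix id (Sum.map id Sum.inr) =
        fromCols V₁ V₃ := by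
      ext i (j | j) <;> rfl
    rw [← h]
    exact conjTranspose_mul_self_submatrix_le_one hV₁₂₃
      (Sum.map_injective.mpr ⟨Function.injective_id, Sum.inr_injective⟩)
  have hV₂ : (fromCols V₂ (0 : Matrix (Fin m) (Fin r) ℝ))ᴴ *
      fromCols V₂ (0 : Matrix (Fin m) (Fin r) ℝ) ≤ 1 := by
    have h : (fromCols V₁ (fromCols V₂ V₃)).submatrix id (Sum.inr ∘ Sum.inl) = V₂ := rfl
    refine conjTranspose_mul_self_fromCols_zero_le_one ?_
    rw [← h]
    exact conjTranspose_mul_self_submatrix_le_one hV₁₂₃ (Sum.inr_injective.comp Sum.inl_injective)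
  calc nuclearNorm (fromCols A (fromCols B C))
      = ((fromCols V₁ (fromCols V₂ V₃))ᴴ * fromCols A (fromCols B C)).trace := by
        rw [← hV, trace_polarFactor_conjTranspose_mul]
    _ = ((fromCols V₁ V₃)ᴴ * fromCols A C).trace + ((fromCols V₂ 0)ᴴ * fromCols B C).trace := by
        simp only [trace_conjTranspose_fromCols_mul_fromCols, conjTranspose_zero,
          Matrix.zero_mul, trace_zero]
        ring
    _ ≤ _ := add_le_add (trace_conjTranspose_mul_le_nuclearNorm hV₁₃ _)
        (trace_conjTranspose_mul_le_nuclearNorm hV₂ _)
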